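/- Let (X,d) be a finite ultrametric space with |Sp(X)| = |X| − 1. Then for every r ∈ Sp(X), the family 𝐁_X contains exactly one ball of radius r; that is, for any s,t ∈ X with r ∈ Sp_s(X) and r ∈ Sp_t(X), the closed balls B_r(s) and B_r(t) coincide as sets. -/

import Mathlib

/-- The spectrum of a metric (sub)space: the set of nonzero distances realized
between distinct points of `A`. -/
def spec {X : Type*} [MetricSpace X] (A : Set X) : Set ℝ :=
  {r : ℝ | ∃ x ∈ A, ∃ y ∈ A, x ≠ y ∧ dist x y = r}

section Aux

variable {X : Type*} [MetricSpace X]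

lemma spec_finite {A : Set X} (hA : A.Finite) : (spec A).Finite := by
  apply Set.Finite.subset ((hA.prod hA).image (fun p => dist p.1 p.2))
  rintro r ⟨x, hx, y, hy, _, h⟩
  exact ⟨(x, y), ⟨hx, hy⟩, h⟩

lemma spec_mono {A B : Set X} (h : A ⊆ B) : spec A ⊆ spec B := by
  rintro r ⟨x, hx, y, hy, hxy, hd⟩
  exact ⟨x, h hx, y, h hy, hxy, hd⟩

/-- A finite nonempty spectrum has a greatest element. -/
lemma spec_exists_max {A : Set X} (hA : A.Finite) (hne : (spec A).Nonempty) :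
    ∃ D ∈ spec A, ∀ b ∈ spec A, b ≤ D := by
  obtain ⟨D, hD, hmax⟩ := Set.Finite.exists_maximalFor id _ (spec_finite hA) hne
  refine ⟨D, hD, fun b hb => ?_⟩
  by_contra hlt
  push_neg at hlt
  exact absurd (hmax hb hlt.le) (not_le.mpr hlt)

/-- Splitting lemma: if `D` is the greatest element of the spectrum and `s ∈ A`,
then every distance is either within the class of `s`, within its complement,
or equal to `D`. -/
lemma spec_split (hultra : ∀ x y z : X, dist x y ≤ max (dist x z) (dist z y))
    {A : Set X} {s : X} (hs : s ∈ A) {D : ℝ} (hD0 : 0 < D)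
    (hmax : ∀ b ∈ spec A, b ≤ D) :
    spec A ⊆ spec {x | x ∈ A ∧ dist x s < D} ∪ spec {x | x ∈ A ∧ D ≤ dist x s} ∪ {D} := by
  -- first: any point of A with D ≤ dist to s has dist exactly D
  have heq : ∀ y ∈ A, D ≤ dist y s → dist y s = D := by
    intro y hy hge
    have hys : y ≠ s := by
      intro h; subst h; simp at hge; linarith
    exact le_antisymm (hmax _ ⟨y, hy, s, hs, hys, rfl⟩) hge
  -- cross distances equal D
  have hcross : ∀ x ∈ A, ∀ y ∈ A, dist x s < D → D ≤ dist y s → dist x y = D := by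
    intro x hx y hy hxlt hyge
    have hysD : dist y s = D := heq y hy hyge
    have h1 : dist x y ≤ D := by
      have := hultra x y s
      rw [dist_comm s y] at this
      exact this.trans (max_le hxlt.le hysD.le)
    have h2 : D ≤ dist x y := by
      have h3 := hultra y s x
      rw [hysD, dist_comm y x] at h3
      rcases le_max_iff.mp h3 with h | h
      · exact h.trans (dist_comm x y ▸ le_refl _) |>.trans_eq rfl
      · linarith
    linarith
  rintro r ⟨x, hx, y, hy, hxy, rfl⟩
  rcases lt_or_ge (dist x s) D with hxlt | hxge
  · rcases lt_or_ge (dist y s) D with hylt | hyge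
    · exact Or.inl (Or.inl ⟨x, ⟨hx, hxlt⟩, y, ⟨hy, hylt⟩, hxy, rfl⟩)
    · exact Or.inr (hcross x hx y hy hxlt hyge)
  · rcases lt_or_ge (dist y s) D with hylt | hyge
    · have := hcross y hy x hx hylt hxge
      rw [dist_comm y x] at this
      exact Or.inr this
    · exact Or.inl (Or.inr ⟨x, ⟨hx, hxge⟩, y, ⟨hy, hyge⟩, hxy, rfl⟩)

/-- The spectrum of a finite nonempty set has at most `|A| - 1` elements. -/
lemma spec_card_bound (hultra : ∀ x y z : X, dist x y ≤ max (dist x z) (dist z y)) :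
    ∀ n : ℕ, ∀ A : Set X, A.Finite → A.ncard ≤ n → A.Nonempty →
      (spec A).ncard + 1 ≤ A.ncard := by
  intro n
  induction n using Nat.strong_induction_on with
  | _ n IH =>
    intro A hA hAn hAne
    rcases Set.eq_empty_or_nonempty (spec A) with hse | hse
    · rw [hse]
      simpa [Nat.one_le_iff_ne_zero, Nat.pos_iff_ne_zero] using (Set.ncard_pos hA).mpr hAne
    obtain ⟨D, hDmem, hDmax⟩ := spec_exists_max hA hse
    obtain ⟨a, ha, b, hb, hab, hdab⟩ := hDmem
    have hD0 : 0 < D := hdab ▸ dist_pos.mpr hab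
    set As : Set X := {x | x ∈ A ∧ dist x a < D} with hAs
    set Bs : Set X := {x | x ∈ A ∧ D ≤ dist x a} with hBs
    have hAsA : As ⊆ A := fun x hx => hx.1
    have hBsA : Bs ⊆ A := fun x hx => hx.1
    have hAsf : As.Finite := hA.subset hAsA
    have hBsf : Bs.Finite := hA.subset hBsA
    have haAs : a ∈ As := ⟨ha, by simpa using hD0⟩
    have hbBs : b ∈ Bs := ⟨hb, by rw [dist_comm b a]; exact hdab.ge⟩
    have hdisj : Disjoint As Bs := by
      rw [Set.disjoint_left]
      rintro x ⟨_, h1⟩ ⟨_, h2⟩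
      linarith
    have hunion : As ∪ Bs = A := by
      apply Set.Subset.antisymm (Set.union_subset hAsA hBsA)
      intro x hx
      rcases lt_or_ge (dist x a) D with h | h
      · exact Or.inl ⟨hx, h⟩
      · exact Or.inr ⟨hx, h⟩
    have hcard : As.ncard + Bs.ncard = A.ncard := by
      rw [← hunion]
      exact (Set.ncard_union_eq hdisj hAsf hBsf).symm
    have hAslt : As.ncard < A.ncard := by
      have : 1 ≤ Bs.ncard := (Set.ncard_pos hBsf).mpr ⟨b, hbBs⟩
      omega
    have hBslt : Bs.ncard < A.ncard := by
      have : 1 ≤ As.ncard := (Set.ncard_pos hAsf).mpr ⟨a, haAs⟩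
      omega
    have h1 := IH As.ncard (lt_of_lt_of_le hAslt hAn) As hAsf le_rfl ⟨a, haAs⟩
    have h2 := IH Bs.ncard (lt_of_lt_of_le hBslt hAn) Bs hBsf le_rfl ⟨b, hbBs⟩
    have hsub := spec_split hultra ha hD0 hDmax
    have hle : (spec A).ncard ≤ (spec As).ncard + (spec Bs).ncard + 1 := by
      calc (spec A).ncard ≤ (spec As ∪ spec Bs ∪ {D}).ncard :=
            Set.ncard_le_ncard hsub (((spec_finite hAsf).union (spec_finite hBsf)).union
              (Set.finite_singleton D))
        _ ≤ (spec As ∪ spec Bs).ncard + ({D} : Set ℝ).ncard := Set.ncard_union_le _ _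
        _ ≤ (spec As).ncard + (spec Bs).ncard + 1 := by
            have := Set.ncard_union_le (spec As) (spec Bs)
            simp only [Set.ncard_singleton]
            omega
    omega

/-- Key lemma: if the spectrum of a finite set `A` has at least `|A| - 1` elements
and `r` is realized at both `s` and `t` within `A`, then `dist s t ≤ r`. -/
lemma spec_key (hultra : ∀ x y z : X, dist x y ≤ max (dist x z) (dist z y)) :
    ∀ n : ℕ, ∀ A : Set X, A.Finite → A.ncard ≤ n → A.ncard ≤ (spec A).ncard + 1 →
      ∀ r : ℝ, ∀ s t : X, s ∈ A → t ∈ A →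
        (∃ x ∈ A, x ≠ s ∧ dist x s = r) → (∃ y ∈ A, y ≠ t ∧ dist y t = r) →
          dist s t ≤ r := by
  intro n
  induction n using Nat.strong_induction_on with
  | _ n IH =>
    intro A hA hAn hAspec r s t hsA htA ⟨x, hxA, hxs, hdx⟩ ⟨y, hyA, hyt, hdy⟩
    have hr0 : 0 < r := hdx ▸ dist_pos.mpr hxs
    by_contra hst
    push_neg at hst
    have hstne : s ≠ t := by
      intro h; subst h; simp at hst; linarith
    have hse : (spec A).Nonempty := ⟨r, x, hxA, s, hsA, hxs, hdx⟩
    obtain ⟨D, hDmem, hDmax⟩ := spec_exists_max hA hse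
    obtain ⟨a, ha, b, hb, hab, hdab⟩ := hDmem
    have hD0 : 0 < D := hdab ▸ dist_pos.mpr hab
    have hrD : r ≤ D := hDmax r ⟨x, hxA, s, hsA, hxs, hdx⟩
    have hstD : dist s t ≤ D := hDmax _ ⟨s, hsA, t, htA, hstne, rfl⟩
    have hrltD : r < D := lt_of_lt_of_le hst hstD
    set As : Set X := {x | x ∈ A ∧ dist x s < D} with hAsdef
    set Bs : Set X := {x | x ∈ A ∧ D ≤ dist x s} with hBsdef
    have hAsA : As ⊆ A := fun z hz => hz.1
    have hBsA : Bs ⊆ A := fun z hz => hz.1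
    have hAsf : As.Finite := hA.subset hAsA
    have hBsf : Bs.Finite := hA.subset hBsA
    have hsAs : s ∈ As := ⟨hsA, by simpa using hD0⟩
    have hxAs : x ∈ As := ⟨hxA, by rw [hdx]; exact hrltD⟩
    -- Bs is nonempty: one of a, b is far from s
    have hBsne : Bs.Nonempty := by
      by_contra hBse
      push_neg at hBse
      have hda : dist a s < D := by
        by_contra h; push_neg at h
        exact Set.notMem_empty a (hBse ▸ (⟨ha, h⟩ : a ∈ Bs))
      have hdb : dist b s < D := by
        by_contra h; push_neg at h
        exact Set.notMem_empty b (hBse ▸ (⟨hb, h⟩ : b ∈ Bs))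
      have := hultra a b s
      rw [dist_comm s b] at this
      rw [hdab] at this
      have : D ≤ max (dist a s) (dist b s) := this
      rcases le_max_iff.mp this with h | h <;> linarith
    have hdisj : Disjoint As Bs := by
      rw [Set.disjoint_left]
      rintro z ⟨_, h1⟩ ⟨_, h2⟩
      linarith
    have hunion : As ∪ Bs = A := by
      apply Set.Subset.antisymm (Set.union_subset hAsA hBsA)
      intro z hz
      rcases lt_or_ge (dist z s) D with h | h
      · exact Or.inl ⟨hz, h⟩
      · exact Or.inr ⟨hz, h⟩
    have hcard : As.ncard + Bs.ncard = A.ncard := by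
      rw [← hunion]
      exact (Set.ncard_union_eq hdisj hAsf hBsf).symm
    -- counting
    have hb1 := spec_card_bound hultra As.ncard As hAsf le_rfl ⟨s, hsAs⟩
    have hb2 := spec_card_bound hultra Bs.ncard Bs hBsf le_rfl hBsne
    have hsub := spec_split hultra hsA hD0 hDmax
    have hUf : (spec As ∪ spec Bs).Finite := (spec_finite hAsf).union (spec_finite hBsf)
    have hle1 : (spec A).ncard ≤ (spec As ∪ spec Bs).ncard + 1 := by
      calc (spec A).ncard ≤ (spec As ∪ spec Bs ∪ {D}).ncard :=
            Set.ncard_le_ncard hsub (hUf.union (Set.finite_singleton D))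
        _ ≤ (spec As ∪ spec Bs).ncard + ({D} : Set ℝ).ncard := Set.ncard_union_le _ _
        _ = (spec As ∪ spec Bs).ncard + 1 := by rw [Set.ncard_singleton]
    have hincl : (spec As ∪ spec Bs).ncard + (spec As ∩ spec Bs).ncard
        = (spec As).ncard + (spec Bs).ncard :=
      Set.ncard_union_add_ncard_inter _ _ (spec_finite hAsf) (spec_finite hBsf)
    -- conclusions of the counting
    have hinter0 : (spec As ∩ spec Bs).ncard = 0 := by omega
    have hAseq : As.ncard ≤ (spec As).ncard + 1 := by omega
    have hinterE : spec As ∩ spec Bs = ∅ := by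
      have hif : (spec As ∩ spec Bs).Finite := (spec_finite hAsf).inter_of_left _
      exact (Set.ncard_eq_zero hif).mp hinter0
    -- r ∈ spec As
    have hrAs : r ∈ spec As := ⟨x, hxAs, s, hsAs, hxs, hdx⟩
    -- case on where t lies
    rcases lt_or_ge (dist t s) D with htlt | htge
    · -- t ∈ As : recurse
      have htAs : t ∈ As := ⟨htA, htlt⟩
      have hyAs : y ∈ As := by
        refine ⟨hyA, ?_⟩
        calc dist y s ≤ max (dist y t) (dist t s) := hultra y s t
          _ < D := max_lt (by rw [hdy]; exact hrltD) htlt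
      have hAslt : As.ncard < n := by
        have : 1 ≤ Bs.ncard := (Set.ncard_pos hBsf).mpr hBsne
        omega
      have := IH As.ncard hAslt As hAsf le_rfl hAseq r s t hsAs htAs
        ⟨x, hxAs, hxs, hdx⟩ ⟨y, hyAs, hyt, hdy⟩
      linarith
    · -- t ∈ Bs : contradiction with disjoint spectra
      have htBs : t ∈ Bs := ⟨htA, htge⟩
      have htsD : dist t s = D := by
        have hts : t ≠ s := hstne.symm
        exact le_antisymm (hDmax _ ⟨t, htA, s, hsA, hts, rfl⟩) htge
      have hyBs : y ∈ Bs := by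
        refine ⟨hyA, ?_⟩
        have h3 := hultra t s y
        rw [htsD, dist_comm t y, hdy] at h3
        rcases le_max_iff.mp h3 with h | h
        · linarith
        · exact h
      have : r ∈ spec As ∩ spec Bs := ⟨hrAs, ⟨y, hyBs, t, htBs, hyt, hdy⟩⟩
      rw [hinterE] at this
      exact this

end Aux

/-- Let `(X,d)` be a finite ultrametric space with `|Sp(X)| = |X| − 1`.
Then for every `r ∈ Sp(X)` the family `𝐁_X` contains exactly one ball of radius `r`:
whenever `r ∈ Sp_s(X)` and `r ∈ Sp_t(X)`, the closed balls `B_r(s)` and `B_r(t)`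
coincide. -/
theorem stmt9 {X : Type*} [MetricSpace X] [Fintype X] [Nonempty X]
    (hultra : ∀ x y z : X, dist x y ≤ max (dist x z) (dist z y))
    (hspec : (spec (Set.univ : Set X)).ncard = Fintype.card X - 1) :
    ∀ r ∈ spec (Set.univ : Set X), ∀ s t : X,
      (∃ x : X, x ≠ s ∧ dist x s = r) → (∃ x : X, x ≠ t ∧ dist x t = r) →
        Metric.closedBall s r = Metric.closedBall t r := by
  intro r hr s t ⟨x, hxs, hdx⟩ ⟨y, hyt, hdy⟩
  have hcard1 : 1 ≤ Fintype.card X := Fintype.card_pos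
  have huc : (Set.univ : Set X).ncard = Fintype.card X := by
    rw [Set.ncard_univ, Nat.card_eq_fintype_card]
  have hkey : dist s t ≤ r := by
    apply spec_key hultra (Fintype.card X) Set.univ Set.finite_univ (le_of_eq huc)
      (by omega) r s t (Set.mem_univ s) (Set.mem_univ t)
      ⟨x, Set.mem_univ x, hxs, hdx⟩ ⟨y, Set.mem_univ y, hyt, hdy⟩
  ext z
  simp only [Metric.mem_closedBall]
  constructor
  · intro hz
    calc dist z t ≤ max (dist z s) (dist s t) := hultra z t s
      _ ≤ r := max_le hz hkey
  · intro hz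
    calc dist z s ≤ max (dist z t) (dist t s) := hultra z s t
      _ ≤ r := max_le hz (by rwa [dist_comm])
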